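/- A ring R is Zhou nil-clean if and only if every square element of R is the sum of two tripotents and a nilpotent that pairwise commute. -/

import Mathlib

/-!
If `x² = p + q + w`, then `p + q` is a root of `f = X (X² - 1) (X² - 4)`, hence `f (x²)` is
nilpotent; `x = 2` makes `f 4 = 720`, so also `30`, nilpotent.

Conversely fix `a` and work in the commutative ring `ℤ[a]`. As `30` is nilpotent, idempotents
lifted from `ℤ ⧸ 30` split `1 = e₂ + e₃ + e₅` with `p • e_p` nilpotent. Reducing the nilpotency of
`f (a²)` and `f ((a + 1)²)` modulo `p` shows that `a² - a`, `a³ - a`, `a⁵ - a` are nilpotent on the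
respective corners. Newton's method then lifts `a e₂` to an idempotent and `a e₃` to a tripotent,
while `a e₅ = (2 - a²) a e₅ + (a² - 1) a e₅` is a sum of two elements that are tripotent modulo
`5` and `a⁵ - a`, which lift to tripotents in the same way.
-/

open Polynomial

def ZhouNilClean (R : Type*) [Ring R] : Prop :=
  ∀ a : R, ∃ p q w : R, p ^ 3 = p ∧ q ^ 3 = q ∧ IsNilpotent w ∧
    Commute p q ∧ Commute p w ∧ Commute q w ∧ a = p + q + w

def IsZhouNilCleanElem {R : Type*} [Ring R] (a : R) : Prop :=
  ∃ p q w : R, p ^ 3 = p ∧ q ^ 3 = q ∧ IsNilpotent w ∧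
    Commute p q ∧ Commute p w ∧ Commute q w ∧ a = p + q + w

/-- Its integer roots `0, ±1, ±2` are the sums of two tripotents of `ℤ`. -/
def tripotentSumPoly {R : Type*} [Ring R] (x : R) : R := x * (x ^ 2 - 1) * (x ^ 2 - 4)

theorem map_tripotentSumPoly {R T F : Type*} [Ring R] [Ring T] [FunLike F R T]
    [RingHomClass F R T] (f : F) (x : R) : f (tripotentSumPoly x) = tripotentSumPoly (f x) := by
  simp [tripotentSumPoly, map_ofNat]

theorem IsZhouNilCleanElem.map {R T F : Type*} [Ring R] [Ring T] [FunLike F R T]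
    [RingHomClass F R T] (f : F) {a : R} (h : IsZhouNilCleanElem a) :
    IsZhouNilCleanElem (f a) := by
  obtain ⟨p, q, w, hp, hq, hw, hpq, hpw, hqw, rfl⟩ := h
  exact ⟨f p, f q, f w, by rw [← map_pow, hp], by rw [← map_pow, hq], hw.map f, hpq.map f,
    hpw.map f, hqw.map f, by simp⟩

section CommRing

variable {S : Type*} [CommRing S]

theorem exists_isIdempotentElem_isNilpotent_sub {x : S} (h : IsNilpotent (x ^ 2 - x)) :
    ∃ e : S, IsIdempotentElem e ∧ IsNilpotent (x - e) := by
  have hunit : IsUnit (2 * x - 1) := by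
    refine isUnit_of_mul_isUnit_left (y := 2 * x - 1) ?_
    rw [show (2 * x - 1) * (2 * x - 1) = 1 + 4 * (x ^ 2 - x) by ring]
    exact ((Commute.all _ _).isNilpotent_mul_left h).isUnit_one_add
  obtain ⟨e, ⟨hxe, he⟩, -⟩ := existsUnique_nilpotent_sub_and_aeval_eq_zero
    (P := (X ^ 2 - X : ℤ[X])) (x := x) (by simpa using h) (by simpa [map_ofNat] using hunit)
  simp only [map_sub, map_pow, aeval_X, sub_eq_zero] at he
  exact ⟨e, by rw [IsIdempotentElem, ← sq, he], hxe⟩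

theorem exists_tripotent_isNilpotent_sub {x : S} (h : IsNilpotent (x ^ 3 - x))
    (h15 : IsNilpotent (15 * x)) : ∃ t : S, t ^ 3 = t ∧ IsNilpotent (x - t) := by
  have hunit : IsUnit (3 * x ^ 2 - 1) := by
    refine isUnit_of_mul_isUnit_left (y := 9 * x ^ 2 - 1) ?_
    rw [show (3 * x ^ 2 - 1) * (9 * x ^ 2 - 1) = 1 + (15 * x * x + 27 * x * (x ^ 3 - x)) by ring]
    rw [← mem_nilradical] at h h15
    exact (mem_nilradical.mp (add_mem (Ideal.mul_mem_right _ _ h15)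
      (Ideal.mul_mem_left _ _ h))).isUnit_one_add
  obtain ⟨t, ⟨hxt, ht⟩, -⟩ := existsUnique_nilpotent_sub_and_aeval_eq_zero
    (P := (X ^ 3 - X : ℤ[X])) (x := x) (by simpa using h) (by simpa [map_ofNat] using hunit)
  simp only [map_sub, map_pow, aeval_X, sub_eq_zero] at ht
  exact ⟨t, ht, hxt⟩

theorem exists_isIdempotentElem_isNilpotent_mul {m n : ℤ} (hmn : IsCoprime m n)
    (h : IsNilpotent ((m * n : ℤ) : S)) :
    ∃ e : S, IsIdempotentElem e ∧ IsNilpotent (m * e) ∧ IsNilpotent (n * (1 - e)) := by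
  obtain ⟨u, v, huv⟩ := hmn
  have huv' : (u : S) * m + v * n = 1 := by exact_mod_cast congrArg (Int.cast : ℤ → S) huv
  rw [← mem_nilradical] at h
  push_cast at h
  obtain ⟨e, he, hne⟩ := exists_isIdempotentElem_isNilpotent_sub (x := (v * n : S)) (by
    rw [← mem_nilradical]
    have : (v * n : S) ^ 2 - v * n = -(u * v) * (m * n) := by linear_combination (v * n) * huv'
    exact this ▸ Ideal.mul_mem_left _ _ h)
  rw [← mem_nilradical] at hne
  refine ⟨e, he, mem_nilradical.mp ?_, mem_nilradical.mp ?_⟩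
  · have : (m * e : S) = v * (m * n) - m * (v * n - e) := by ring
    exact this ▸ sub_mem (Ideal.mul_mem_left _ _ h) (Ideal.mul_mem_left _ _ hne)
  · have : (n * (1 - e) : S) = u * (m * n) + n * (v * n - e) := by linear_combination (-n) * huv'
    exact this ▸ add_mem (Ideal.mul_mem_left _ _ h) (Ideal.mul_mem_left _ _ hne)

theorem isNilpotent_tripotentSumPoly_add {p q w : S} (hp : p ^ 3 = p) (hq : q ^ 3 = q)
    (hw : IsNilpotent w) : IsNilpotent (tripotentSumPoly (p + q + w)) := by
  have hpq : tripotentSumPoly (p + q) = 0 := by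
    unfold tripotentSumPoly
    linear_combination (p ^ 2 + 5 * p * q + 10 * q ^ 2 - 4) * hp +
      (10 * p ^ 2 + 5 * p * q + q ^ 2 - 4) * hq
  have key := isNilpotent_aeval_sub_of_isNilpotent_sub (X * (X ^ 2 - 1) * (X ^ 2 - 4) : ℤ[X])
    (a := p + q + w) (b := p + q) (by simpa using hw)
  simp only [map_mul, map_sub, map_pow, aeval_X, map_one, map_ofNat] at key
  rwa [← tripotentSumPoly, ← tripotentSumPoly, hpq, sub_zero] at key

theorem IsZhouNilCleanElem.of_isNilpotent_sub {a p q : S} (hp : p ^ 3 = p) (hq : q ^ 3 = q)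
    (h : IsNilpotent (a - p - q)) : IsZhouNilCleanElem a :=
  ⟨p, q, a - p - q, hp, hq, h, .all _ _, .all _ _, .all _ _, by ring⟩

theorem IsZhouNilCleanElem.of_mul_of_mul_one_sub {a e : S} (he : IsIdempotentElem e)
    (h₁ : IsZhouNilCleanElem (a * e)) (h₂ : IsZhouNilCleanElem (a * (1 - e))) :
    IsZhouNilCleanElem a := by
  obtain ⟨p₁, q₁, w₁, hp₁, hq₁, hw₁, -, -, -, h₁⟩ := h₁
  obtain ⟨p₂, q₂, w₂, hp₂, hq₂, hw₂, -, -, -, h₂⟩ := h₂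
  have glue {x y : S} (hx : x ^ 3 = x) (hy : y ^ 3 = y) :
      (x * e + y * (1 - e)) ^ 3 = x * e + y * (1 - e) := by
    linear_combination ((x - y) ^ 3 * (e + 1) + 3 * (x - y) ^ 2 * y) * he.eq + e * hx +
      (1 - e) * hy
  refine .of_isNilpotent_sub (glue hp₁ hp₂) (glue hq₁ hq₂) ?_
  have : a - (p₁ * e + p₂ * (1 - e)) - (q₁ * e + q₂ * (1 - e)) = w₁ * e + w₂ * (1 - e) := by
    linear_combination e * h₁ + (1 - e) * h₂ - 2 * a * he.eq
  rw [this, ← mem_nilradical] at *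
  exact add_mem (Ideal.mul_mem_right _ _ hw₁) (Ideal.mul_mem_right _ _ hw₂)

theorem IsZhouNilCleanElem.of_isNilpotent_pow_five_sub {x : S} (h : IsNilpotent (x ^ 5 - x))
    (h5 : IsNilpotent (5 * x)) : IsZhouNilCleanElem x := by
  rw [← mem_nilradical] at h h5
  have h15 (z : S) : IsNilpotent (15 * (z * x)) := by
    rw [← mem_nilradical, show 15 * (z * x) = 3 * z * (5 * x) by ring]
    exact Ideal.mul_mem_left _ _ h5
  -- on `𝔽₅ = {0, ±1, ±2}` both summands of `x = (2 - x ^ 2) * x + (x ^ 2 - 1) * x` lie in `{0, ±1}`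
  obtain ⟨p, hp, hpx⟩ := exists_tripotent_isNilpotent_sub (x := (2 - x ^ 2) * x)
    (by
      rw [← mem_nilradical]
      have : ((2 - x ^ 2) * x) ^ 3 - (2 - x ^ 2) * x =
          (-x ^ 4 + 6 * x ^ 2 - 13) * (x ^ 5 - x) + (3 * x ^ 2 - 3) * (5 * x) := by ring
      exact this ▸ add_mem (Ideal.mul_mem_left _ _ h) (Ideal.mul_mem_left _ _ h5))
    (h15 _)
  obtain ⟨q, hq, hqx⟩ := exists_tripotent_isNilpotent_sub (x := (x ^ 2 - 1) * x)
    (by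
      rw [← mem_nilradical]
      have : ((x ^ 2 - 1) * x) ^ 3 - (x ^ 2 - 1) * x =
          (x ^ 4 - 3 * x ^ 2 + 4) * (x ^ 5 - x) + (1 - x ^ 2) * (5 * x) := by ring
      exact this ▸ add_mem (Ideal.mul_mem_left _ _ h) (Ideal.mul_mem_left _ _ h5))
    (h15 _)
  refine .of_isNilpotent_sub hp hq ?_
  rw [← mem_nilradical] at hpx hqx ⊢
  have : x - p - q = ((2 - x ^ 2) * x - p) + ((x ^ 2 - 1) * x - q) := by ring
  exact this ▸ add_mem hpx hqx

theorem IsZhouNilCleanElem.mul_of_two {a c : S} (hc : IsIdempotentElem c)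
    (h2 : IsNilpotent (2 * c)) (ha : IsNilpotent (tripotentSumPoly (a ^ 2))) :
    IsZhouNilCleanElem (a * c) := by
  -- modulo `2`, `tripotentSumPoly (a ^ 2) = a ^ 6 * (a - 1) ^ 4`
  have hsq : IsNilpotent ((a ^ 2 - a) * c) := by
    refine IsNilpotent.of_pow (m := 6) ?_
    rw [← mem_nilradical] at ha h2 ⊢
    have : ((a ^ 2 - a) * c) ^ 6 = (a - 1) ^ 2 * c ^ 6 * tripotentSumPoly (a ^ 2) +
        c ^ 5 * (-2 * a ^ 2 + 4 * a ^ 3 - 2 * a ^ 4 + 3 * a ^ 6 - 8 * a ^ 7 + 10 * a ^ 8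
          - 10 * a ^ 9 + 7 * a ^ 10 - 2 * a ^ 11) * (2 * c) := by
      unfold tripotentSumPoly; ring
    exact this ▸ add_mem (Ideal.mul_mem_left _ _ ha) (Ideal.mul_mem_left _ _ h2)
  obtain ⟨e, he, hae⟩ := exists_isIdempotentElem_isNilpotent_sub (x := a * c)
    (by rwa [show (a * c) ^ 2 - a * c = (a ^ 2 - a) * c by linear_combination a ^ 2 * hc.eq])
  exact .of_isNilpotent_sub (he.pow_succ_eq 2) (zero_pow three_ne_zero) (by rwa [sub_zero])

theorem IsZhouNilCleanElem.mul_of_three {a c : S} (hc : IsIdempotentElem c)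
    (h3 : IsNilpotent (3 * c)) (ha : IsNilpotent (tripotentSumPoly (a ^ 2)))
    (ha' : IsNilpotent (tripotentSumPoly ((a + 1) ^ 2))) : IsZhouNilCleanElem (a * c) := by
  rw [← mem_nilradical] at h3
  have hfifth {b : S} (hb : IsNilpotent (tripotentSumPoly (b ^ 2))) :
      (b ^ 5 - b) * c ∈ nilradical S := by
    rw [mem_nilradical]
    refine IsNilpotent.of_pow (m := 2) ?_
    rw [← mem_nilradical] at hb ⊢
    have : ((b ^ 5 - b) * c) ^ 2 =
        c ^ 2 * tripotentSumPoly (b ^ 2) + c * (b ^ 6 - b ^ 2) * (3 * c) := by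
      unfold tripotentSumPoly; ring
    exact this ▸ add_mem (Ideal.mul_mem_left _ _ hb) (Ideal.mul_mem_left _ _ h3)
  -- modulo `3`, `b ^ 5 - b = (b ^ 3 - b) * (b ^ 2 + 1)`,
  -- and `a * (a ^ 2 + 1) + (2 + 2 * a) * ((a + 1) ^ 2 + 1) = 1`
  have hcube : (a ^ 3 - a) * c ∈ nilradical S := by
    have : (a ^ 3 - a) * c = a * ((a ^ 5 - a) * c) + (2 + 2 * a) * (((a + 1) ^ 5 - (a + 1)) * c) +
        (-3 * a - 9 * a ^ 2 - 13 * a ^ 3 - 10 * a ^ 4 - 4 * a ^ 5 - a ^ 6) * (3 * c) := by ring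
    exact this ▸ add_mem (add_mem (Ideal.mul_mem_left _ _ (hfifth ha))
      (Ideal.mul_mem_left _ _ (hfifth ha'))) (Ideal.mul_mem_left _ _ h3)
  obtain ⟨t, ht, hat⟩ := exists_tripotent_isNilpotent_sub (x := a * c)
    (by
      rw [← mem_nilradical, show (a * c) ^ 3 - a * c = (a ^ 3 - a) * c by
        linear_combination a ^ 3 * (c + 1) * hc.eq]
      exact hcube)
    (by
      rw [← mem_nilradical, show 15 * (a * c) = 5 * a * (3 * c) by ring]
      exact Ideal.mul_mem_left _ _ h3)
  exact .of_isNilpotent_sub ht (zero_pow three_ne_zero) (by rwa [sub_zero])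

theorem IsZhouNilCleanElem.mul_of_five {a c : S} (hc : IsIdempotentElem c)
    (h5 : IsNilpotent (5 * c)) (ha : IsNilpotent (tripotentSumPoly (a ^ 2)))
    (ha' : IsNilpotent (tripotentSumPoly ((a + 1) ^ 2))) : IsZhouNilCleanElem (a * c) := by
  rw [← mem_nilradical] at h5 ha ha'
  refine .of_isNilpotent_pow_five_sub ?_ ?_
  · -- modulo `5`, `tripotentSumPoly (b ^ 2) = b ^ 10 - b ^ 2` and `(a + 1) ^ 5 = a ^ 5 + 1`
    have : (a * c) ^ 5 - a * c = 2 * c * tripotentSumPoly (a ^ 2) +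
        3 * c * tripotentSumPoly ((a + 1) ^ 2) +
        (7 * a + 14 * a ^ 2 - 12 * a ^ 3 - 81 * a ^ 4 - 133 * a ^ 5 - 121 * a ^ 6 - 72 * a ^ 7
          - 27 * a ^ 8 - 6 * a ^ 9 - a ^ 10) * (5 * c) := by
      unfold tripotentSumPoly
      linear_combination a ^ 5 * (c ^ 3 + c ^ 2 + c + 1) * hc.eq
    rw [← mem_nilradical, this]
    exact add_mem (add_mem (Ideal.mul_mem_left _ _ ha) (Ideal.mul_mem_left _ _ ha'))
      (Ideal.mul_mem_left _ _ h5)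
  · rw [← mem_nilradical, mul_left_comm]
    exact Ideal.mul_mem_left _ _ h5

theorem isZhouNilCleanElem_of_forall_isNilpotent_tripotentSumPoly
    (h : ∀ b : S, IsNilpotent (tripotentSumPoly (b ^ 2))) (a : S) : IsZhouNilCleanElem a := by
  have h30 : IsNilpotent (30 : S) := by
    have h720 := h 2
    norm_num [tripotentSumPoly] at h720
    refine IsNilpotent.of_pow (m := 4) ?_
    rw [show (30 : S) ^ 4 = 1125 * 720 by norm_num]
    exact (Commute.all _ _).isNilpotent_mul_left h720
  obtain ⟨e, he, h2e, h15e⟩ := exists_isIdempotentElem_isNilpotent_mul (S := S) (m := 2) (n := 15)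
    (by norm_num) (by norm_num; exact h30)
  obtain ⟨f, hf, h3f, h10f⟩ := exists_isIdempotentElem_isNilpotent_mul (S := S) (m := 3) (n := 10)
    (by norm_num) (by norm_num; exact h30)
  push_cast at h2e h15e h3f h10f
  refine .of_mul_of_mul_one_sub he (.mul_of_two he h2e (h a)) (.of_mul_of_mul_one_sub hf ?_ ?_)
  · rw [mul_assoc]
    refine .mul_of_three (he.one_sub.mul hf) ?_ (h a) (h (a + 1))
    rw [← mul_assoc, mul_comm 3, mul_assoc]
    exact (Commute.all _ _).isNilpotent_mul_left h3f
  · rw [mul_assoc]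
    refine .mul_of_five (he.one_sub.mul hf.one_sub) ?_ (h a) (h (a + 1))
    rw [← mem_nilradical] at h15e h10f ⊢
    have : 5 * ((1 - e) * (1 - f)) = 15 * (1 - e) * (1 - f) - 10 * (1 - f) * (1 - e) := by ring
    exact this ▸ sub_mem (Ideal.mul_mem_right _ _ h15e) (Ideal.mul_mem_right _ _ h10f)

end CommRing

open scoped IsMulCommutative in
theorem IsZhouNilCleanElem.isNilpotent_tripotentSumPoly {R : Type*} [Ring R] {a : R}
    (h : IsZhouNilCleanElem a) : IsNilpotent (tripotentSumPoly a) := by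
  obtain ⟨p, q, w, hp, hq, hw, hpq, hpw, hqw, rfl⟩ := h
  let A := Algebra.adjoin ℤ ({p, q, w} : Set R)
  have : IsMulCommutative A := Algebra.isMulCommutative_adjoin ℤ (by
    simp only [Set.mem_insert_iff, Set.mem_singleton_iff]
    rintro x (rfl | rfl | rfl) y (rfl | rfl | rfl) <;> simp [hpq.eq, hpw.eq, hqw.eq])
  have hmem {x : R} (hx : x ∈ ({p, q, w} : Set R)) : x ∈ A := Algebra.subset_adjoin hx
  have key := isNilpotent_tripotentSumPoly_add (S := A) (p := ⟨p, hmem (by simp)⟩)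
    (q := ⟨q, hmem (by simp)⟩) (w := ⟨w, hmem (by simp)⟩) (Subtype.ext hp) (Subtype.ext hq)
    ((IsNilpotent.map_iff (f := A.val) Subtype.val_injective).mp hw)
  simpa [map_tripotentSumPoly] using key.map A.val

theorem stmt_15 (R : Type*) [Ring R] :
    ZhouNilClean R ↔
      ∀ x : R, ∃ p q w : R, p ^ 3 = p ∧ q ^ 3 = q ∧ IsNilpotent w ∧
        Commute p q ∧ Commute p w ∧ Commute q w ∧ x ^ 2 = p + q + w := by
  refine ⟨fun h x => h (x ^ 2), fun h a => ?_⟩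
  let S := Algebra.adjoin ℤ ({a} : Set R)
  have hS (b : S) : IsNilpotent (tripotentSumPoly (b ^ 2)) := by
    rw [← IsNilpotent.map_iff (f := S.val) Subtype.val_injective]
    simpa [map_tripotentSumPoly] using IsZhouNilCleanElem.isNilpotent_tripotentSumPoly (h b)
  exact (isZhouNilCleanElem_of_forall_isNilpotent_tripotentSumPoly hS
    ⟨a, Algebra.self_mem_adjoin_singleton ℤ a⟩).map S.val
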